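/- arXiv:1504.00391 — 4 statements merged into one kernel-verified Lean document; each statement's English description precedes it below -/
import Mathlib

section
/- Let C be a partition of the player set N of a finite normal-form game with identical interests that is permutation-invariant. Then for every p ∈ Δ^n, the average of the utilities at the profiles (p_i, p̄_{-i}) equals the utility at the centroid: (1/n) ∑_{i=1}^n U(p_i, p̄_{-i}) = U(p̄). -/
open MeasureTheory Filter Topology

noncomputable section

namespace ECFP

variable {ι A κ : Type*}

/-- The mixed-strategy simplex over a finite action set `Y` inside the action universe `A`. -/
def simplex (Y : Finset A) : Set (A → ℝ) :=
  {p | (∀ a, 0 ≤ p a) ∧ (∀ a, a ∉ Y → p a = 0) ∧ ∑ a ∈ Y, p a = 1}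

/-- The space `Δⁿ` of joint mixed strategies. -/
def Delta (Y : ι → Finset A) : Set (ι → A → ℝ) :=
  {p | ∀ i, p i ∈ simplex (Y i)}

variable [Fintype ι] [DecidableEq ι] [Fintype A] [DecidableEq κ]

/-- The mixed extension of the common utility `u`:
`U(p₁,…,pₙ) = ∑_y u(y) p₁(y₁)⋯pₙ(yₙ)`. -/
def U (u : (ι → A) → ℝ) (p : ι → A → ℝ) : ℝ :=
  ∑ y : ι → A, u y * ∏ i, p i (y i)

/-- The `ε`-best-response set of player `i` against the joint strategy `p`
(only the components `p_{-i}` matter, since player `i`'s component is overwritten):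
`{pᵢ ∈ Δᵢ : U(pᵢ,p_{-i}) ≥ U(qᵢ,p_{-i}) - ε  ∀ qᵢ ∈ Δᵢ}`. -/
def BRi (Y : ι → Finset A) (u : (ι → A) → ℝ) (ε : ℝ) (p : ι → A → ℝ) (i : ι) :
    Set (A → ℝ) :=
  {pi | pi ∈ simplex (Y i) ∧
    ∀ qi ∈ simplex (Y i),
      U u (Function.update p i pi) ≥ U u (Function.update p i qi) - ε}

/-- The joint `ε`-best-response set `BR^ε(p) = (BR₁^ε(p_{-1}),…,BRₙ^ε(p_{-n}))`. -/
def BR (Y : ι → Finset A) (u : (ι → A) → ℝ) (ε : ℝ) (p : ι → A → ℝ) :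
    Set (ι → A → ℝ) :=
  {b | ∀ i, b i ∈ BRi Y u ε p i}

/-- The profile obtained from `y` by swapping the strategies of players `i` and `j`. -/
def swapStrat (y : ι → A) (i j : ι) : ι → A :=
  Function.update (Function.update y i (y j)) j (y i)

/-- `cls : ι → κ` encodes a permutation-invariant partition of the player set (the classes
are the fibers of `cls`): players in the same class have the same action set, and the utility
is invariant under swapping the strategies of two same-class players in any strategy profile. -/
def PermInvariant (Y : ι → Finset A) (u : (ι → A) → ℝ) (cls : ι → κ) : Prop :=
  ∀ i j : ι, cls i = cls j →
    Y i = Y j ∧ ∀ y : ι → A, (∀ k, y k ∈ Y k) → u (swapStrat y i j) = u y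

/-- The equivalence class (as a finset of players) of player `i`. -/
def cluster (cls : ι → κ) (i : ι) : Finset ι :=
  Finset.univ.filter (fun j => cls j = cls i)

/-- The centroid distribution `p̄`: player `i` is assigned the average of the strategies of
the players in `i`'s class. -/
def centroid (cls : ι → κ) (p : ι → A → ℝ) : ι → A → ℝ :=
  fun i => ((cluster cls i).card : ℝ)⁻¹ • ∑ j ∈ cluster cls i, p j

/-- A joint strategy is class-constant if same-class players use identical strategies. -/
def classConst (cls : ι → κ) (p : ι → A → ℝ) : Prop :=
  ∀ i j, cls i = cls j → p i = p j

/-- The set of Nash equilibria. -/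
def NE (Y : ι → Finset A) (u : (ι → A) → ℝ) : Set (ι → A → ℝ) :=
  {p | p ∈ Delta Y ∧ ∀ i, ∀ qi ∈ simplex (Y i),
    U u (Function.update p i qi) ≤ U u p}

/-- The set of symmetric Nash equilibria relative to the partition `cls`. -/
def SNE (Y : ι → Finset A) (u : (ι → A) → ℝ) (cls : ι → κ) : Set (ι → A → ℝ) :=
  {p | p ∈ NE Y u ∧ classConst cls p}

/-- The set of mean-centric equilibria relative to the partition `cls`:
`U(pᵢ, p̄_{-i}) ≥ U(pᵢ', p̄_{-i})` for all `pᵢ' ∈ Δᵢ` and all `i`. -/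
def MCE (Y : ι → Finset A) (u : (ι → A) → ℝ) (cls : ι → κ) : Set (ι → A → ℝ) :=
  {p | p ∈ Delta Y ∧ ∀ i, ∀ qi ∈ simplex (Y i),
    U u (Function.update (centroid cls p) i qi)
      ≤ U u (Function.update (centroid cls p) i (p i))}

/-- `V(p) = (1/n) ∑ᵢ U(pᵢ, p̄_{-i})`. -/
def Vfun (u : (ι → A) → ℝ) (cls : ι → κ) (p : ι → A → ℝ) : ℝ :=
  (Fintype.card ι : ℝ)⁻¹ * ∑ i, U u (Function.update (centroid cls p) i (p i))

/-- A discrete-time ECFP process w.r.t. `(Γ, 𝒞)`: `q(1) = a(1)`,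
`q(t+1) = q(t) + γₜ (a(t+1) − q(t))` and `a(t+1) ∈ BR^{εₜ}(q̄(t))` for all `t`
(time is indexed by `ℕ`, i.e. `t = 0` plays the role of `t = 1` in the paper). -/
structure IsECFP (Y : ι → Finset A) (u : (ι → A) → ℝ) (cls : ι → κ)
    (γ ε : ℕ → ℝ) (a q : ℕ → ι → A → ℝ) : Prop where
  a_init_mem : a 0 ∈ Delta Y
  q_mem : ∀ t, q t ∈ Delta Y
  init : q 0 = a 0
  step : ∀ t, q (t + 1) = q t + γ t • (a (t + 1) - q t)
  br : ∀ t, a (t + 1) ∈ BR Y u (ε t) (centroid cls (q t))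

/-- A solution of the differential inclusion `ẋ ∈ F(x)` taking values in `Δⁿ`:
an everywhere-`Δⁿ`-valued trajectory on `[0,∞)` which is the integral of a locally
integrable selection `g(t) ∈ F(x(t))` (a.e.). -/
def IsSolution (Y : ι → Finset A) (F : (ι → A → ℝ) → Set (ι → A → ℝ))
    (x : ℝ → ι → A → ℝ) : Prop :=
  (∀ t : ℝ, 0 ≤ t → x t ∈ Delta Y) ∧
  ∃ g : ℝ → ι → A → ℝ,
    LocallyIntegrableOn g (Set.Ici (0 : ℝ)) ∧
    (∀ᵐ t ∂(volume.restrict (Set.Ici (0 : ℝ))), g t ∈ F (x t)) ∧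
    ∀ t : ℝ, 0 ≤ t → x t = x 0 + ∫ s in Set.Ioc (0 : ℝ) t, g s

/-- Right-hand side of the joint CT-ECFP differential inclusion `q̇ ∈ BR(q̄) − q`. -/
def Fjoint (Y : ι → Finset A) (u : (ι → A) → ℝ) (cls : ι → κ)
    (q : ι → A → ℝ) : Set (ι → A → ℝ) :=
  (fun b => b - q) '' BR Y u 0 (centroid cls q)

/-- Right-hand side of the centroid CT-ECFP differential inclusion `ẏ ∈ BR(y) − y`. -/
def Fcent (Y : ι → Finset A) (u : (ι → A) → ℝ)
    (y : ι → A → ℝ) : Set (ι → A → ℝ) :=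
  (fun b => b - y) '' BR Y u 0 y

/-- The ω-limit set of a continuous-time trajectory: all limits of sequences
`x(t_k)` with `t_k → ∞`. -/
def omegaLimitSet (x : ℝ → ι → A → ℝ) : Set (ι → A → ℝ) :=
  {p | ∃ tk : ℕ → ℝ, Tendsto tk atTop atTop ∧ Tendsto (fun k => x (tk k)) atTop (𝓝 p)}

/-- The set of limit points of a (discrete-time) sequence. -/
def seqLimitPoints (q : ℕ → ι → A → ℝ) : Set (ι → A → ℝ) :=
  {p | ∃ φ : ℕ → ℕ, StrictMono φ ∧ Tendsto (fun k => q (φ k)) atTop (𝓝 p)}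

/-- A compact set `X ⊆ Δⁿ` is internally chain transitive for the inclusion `ẋ ∈ F(x)`:
any two points of `X` can be joined, for every `ε > 0` and `T > 0`, by finitely many
solution pieces of duration `> T` staying in `X`, with jumps of size `≤ ε`. -/
def InternallyChainTransitive (Y : ι → Finset A)
    (F : (ι → A → ℝ) → Set (ι → A → ℝ)) (X : Set (ι → A → ℝ)) : Prop :=
  IsCompact X ∧ X ⊆ Delta Y ∧
  ∀ ξ ∈ X, ∀ η ∈ X, ∀ ε : ℝ, 0 < ε → ∀ T : ℝ, 0 < T →
    ∃ k : ℕ, 0 < k ∧ ∃ x : ℕ → ℝ → ι → A → ℝ, ∃ tt : ℕ → ℝ,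
      (∀ i < k, IsSolution Y F (x i)) ∧
      (∀ i < k, T < tt i) ∧
      (∀ i < k, ∀ s : ℝ, 0 ≤ s → s ≤ tt i → x i s ∈ X) ∧
      (∀ i, i + 1 < k → ‖x i (tt i) - x (i + 1) 0‖ ≤ ε) ∧
      ‖x 0 0 - ξ‖ ≤ ε ∧ ‖x (k - 1) (tt (k - 1)) - η‖ ≤ ε

end ECFP

/-!
Write `p̄` for the centroid profile. By multilinearity of `U`, `U(p̄) = U(p̄ᵢ, p̄_{-i})` is the
average over `j ∈ C(i)` of `U(pⱼ, p̄_{-i})`. Swapping `i` and `j` maps `(pⱼ, p̄_{-i})` to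
`(pⱼ, p̄_{-j})` because `p̄ᵢ = p̄ⱼ`, and leaves `U` unchanged by permutation invariance. Hence
`n U(p̄) = ∑ᵢ |C(i)|⁻¹ ∑_{j ∈ C(i)} U(pⱼ, p̄_{-j})`, and every `j` occurs in exactly `|C(j)|` of
the inner sums, each time with weight `|C(j)|⁻¹`.
-/

namespace ECFP

variable {ι A κ : Type*}

section MixedExtension

variable [Fintype ι] [DecidableEq ι] [Fintype A]

lemma U_comp_perm (Y : ι → Finset A) (u : (ι → A) → ℝ) (σ : Equiv.Perm ι)
    (hu : ∀ y : ι → A, (∀ k, y k ∈ Y k) → u (y ∘ σ) = u y)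
    (P : ι → A → ℝ) (hP : ∀ k, ∀ a ∉ Y k, P k a = 0) :
    U u (P ∘ σ) = U u P := by
  refine (Fintype.sum_equiv (Equiv.arrowCongr σ.symm (Equiv.refl A)) _ _ fun y => ?_).symm
  change u y * _ = u (y ∘ σ) * ∏ k, P (σ k) (y (σ k))
  rw [Equiv.prod_comp σ fun k => P k (y k)]
  by_cases hy : ∀ k, y k ∈ Y k
  · rw [hu y hy]
  · obtain ⟨k, hk⟩ := not_forall.mp hy
    rw [Finset.prod_eq_zero (Finset.mem_univ k) (hP k _ hk), mul_zero, mul_zero]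

lemma U_update (u : (ι → A) → ℝ) (P : ι → A → ℝ) (i : ι) (q : A → ℝ) :
    U u (Function.update P i q) =
      ∑ y : ι → A, u y * (q (y i) * ∏ k ∈ Finset.univ.erase i, P k (y k)) := by
  refine Fintype.sum_congr _ _ fun y => ?_
  rw [← Finset.mul_prod_erase _ _ (Finset.mem_univ i), Function.update_self]
  congr 2
  exact Finset.prod_congr rfl fun k hk => by rw [Function.update_of_ne (Finset.ne_of_mem_erase hk)]

lemma U_update_smul_sum (u : (ι → A) → ℝ) (P : ι → A → ℝ) (i : ι) (c : ℝ)
    {β : Type*} (s : Finset β) (f : β → A → ℝ) :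
    U u (Function.update P i (c • ∑ j ∈ s, f j))
      = c * ∑ j ∈ s, U u (Function.update P i (f j)) := by
  simp only [U_update, Pi.smul_apply, Finset.sum_apply, smul_eq_mul, Finset.mul_sum,
    Finset.sum_mul]
  rw [Finset.sum_comm]
  exact Finset.sum_congr rfl fun j _ => Fintype.sum_congr _ _ fun y => by ring

end MixedExtension

section Clusters

variable [Fintype ι] [DecidableEq κ]

lemma mem_cluster (cls : ι → κ) {i j : ι} : j ∈ cluster cls i ↔ cls j = cls i := by
  simp [cluster]

lemma cluster_congr (cls : ι → κ) {i j : ι} (h : cls i = cls j) :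
    cluster cls i = cluster cls j := by
  rw [cluster, cluster, h]

lemma sum_inv_card_cluster_mul_sum (cls : ι → κ) (g : ι → ℝ) :
    ∑ i, ((cluster cls i).card : ℝ)⁻¹ * ∑ j ∈ cluster cls i, g j = ∑ j, g j := by
  calc ∑ i, ((cluster cls i).card : ℝ)⁻¹ * ∑ j ∈ cluster cls i, g j
      = ∑ j, ∑ i ∈ cluster cls j, ((cluster cls i).card : ℝ)⁻¹ * g j := by
        simp only [Finset.mul_sum]
        exact Finset.sum_comm' fun i j => by simp only [mem_cluster, Finset.mem_univ]; tauto
    _ = ∑ j, ((cluster cls j).card : ℝ) * ((cluster cls j).card : ℝ)⁻¹ * g j := by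
        refine Fintype.sum_congr _ _ fun j => ?_
        rw [Finset.sum_congr rfl fun i hi => by rw [cluster_congr cls ((mem_cluster cls).1 hi)],
          Finset.sum_const, nsmul_eq_mul, mul_assoc]
    _ = ∑ j, g j := by
        refine Fintype.sum_congr _ _ fun j => ?_
        have hpos : 0 < (cluster cls j).card := Finset.card_pos.2 ⟨j, (mem_cluster cls).2 rfl⟩
        rw [mul_inv_cancel₀ (by positivity), one_mul]

lemma centroid_congr (cls : ι → κ) (p : ι → A → ℝ) {i j : ι} (h : cls i = cls j) :
    centroid cls p i = centroid cls p j := by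
  rw [centroid, centroid, cluster_congr cls h]

lemma centroid_apply_eq_zero (Y : ι → Finset A) (cls : ι → κ)
    (hY : ∀ i j, cls i = cls j → Y i = Y j)
    (p : ι → A → ℝ) (hp : ∀ k, ∀ a ∉ Y k, p k a = 0) (i : ι) {a : A} (ha : a ∉ Y i) :
    centroid cls p i a = 0 := by
  simp only [centroid, Pi.smul_apply, Finset.sum_apply, smul_eq_mul]
  rw [Finset.sum_eq_zero fun j hj => hp j a (by rwa [hY j i ((mem_cluster cls).1 hj)]), mul_zero]

end Clusters

lemma swapStrat_eq_comp_swap [DecidableEq ι] (y : ι → A) (i j : ι) :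
    swapStrat y i j = y ∘ Equiv.swap i j := by
  funext k
  rcases eq_or_ne k j with rfl | hkj
  · simp [swapStrat]
  rcases eq_or_ne k i with rfl | hki
  · simp [swapStrat, hkj]
  · simp [swapStrat, Function.update_of_ne hkj, Function.update_of_ne hki,
      Equiv.swap_apply_of_ne_of_ne hki hkj]

lemma PermInvariant.U_update_centroid_eq [Fintype ι] [DecidableEq ι] [Fintype A]
    [DecidableEq κ] {Y : ι → Finset A} {u : (ι → A) → ℝ} {cls : ι → κ}
    (hpi : PermInvariant Y u cls) (p : ι → A → ℝ) (hp : ∀ k, ∀ a ∉ Y k, p k a = 0)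
    {i j : ι} (hij : cls i = cls j) (q : A → ℝ) (hq : ∀ a ∉ Y i, q a = 0) :
    U u (Function.update (centroid cls p) i q) = U u (Function.update (centroid cls p) j q) := by
  have hcomp : centroid cls p ∘ Equiv.swap i j = centroid cls p := by
    funext k
    rcases eq_or_ne k i with rfl | hki
    · simp [centroid_congr cls p hij]
    rcases eq_or_ne k j with rfl | hkj
    · simp [centroid_congr cls p hij]
    · simp [Equiv.swap_apply_of_ne_of_ne hki hkj]
  have hsupp : ∀ k, ∀ a ∉ Y k, Function.update (centroid cls p) i q k a = 0 := by
    intro k a ha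
    rcases eq_or_ne k i with rfl | hki
    · simpa using hq a ha
    · rw [Function.update_of_ne hki]
      exact centroid_apply_eq_zero Y cls (fun k l h => (hpi k l h).1) p hp k ha
  have hu : ∀ y : ι → A, (∀ k, y k ∈ Y k) → u (y ∘ Equiv.swap i j) = u y := fun y hy => by
    rw [← swapStrat_eq_comp_swap]
    exact (hpi i j hij).2 y hy
  rw [← U_comp_perm Y u (Equiv.swap i j) hu _ hsupp, Function.update_comp_equiv, hcomp,
    Equiv.symm_swap, Equiv.swap_apply_left]

variable [Fintype ι] [DecidableEq ι] [Fintype A] [DecidableEq κ]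

variable [Nonempty ι]

theorem average_U_eq_U_centroid_general
    (Y : ι → Finset A) (u : (ι → A) → ℝ)
    (cls : ι → κ) (hpi : PermInvariant Y u cls)
    (p : ι → A → ℝ) (hp : p ∈ Delta Y) :
    (Fintype.card ι : ℝ)⁻¹ *
        ∑ i, U u (Function.update (centroid cls p) i (p i))
      = U u (centroid cls p) := by
  set c := centroid cls p
  have hsupp : ∀ k, ∀ a ∉ Y k, p k a = 0 := fun k => (hp k).2.1
  have hsum : ∑ i, U u (Function.update c i (p i)) = ∑ _i : ι, U u c :=
    calc ∑ i, U u (Function.update c i (p i))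
        = ∑ i, ((cluster cls i).card : ℝ)⁻¹ *
            ∑ j ∈ cluster cls i, U u (Function.update c i (p j)) := by
          rw [← sum_inv_card_cluster_mul_sum cls]
          refine Fintype.sum_congr _ _ fun i => congrArg _ (Finset.sum_congr rfl fun j hj => ?_)
          exact hpi.U_update_centroid_eq p hsupp ((mem_cluster cls).1 hj) (p j) (hsupp j)
      _ = ∑ i, U u (Function.update c i (c i)) :=
          Fintype.sum_congr _ _ fun i => (U_update_smul_sum u c i _ _ p).symm
      _ = ∑ _i : ι, U u c := by simp only [Function.update_eq_self]
  rw [hsum, Finset.sum_const, Finset.card_univ, nsmul_eq_mul, inv_mul_cancel_left₀]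
  exact_mod_cast Fintype.card_ne_zero

/-- **Lemma 1.** For a permutation-invariant partition of an identical-interests game and any
`p ∈ Δⁿ`, `(1/n) ∑ᵢ U(pᵢ, p̄_{-i}) = U(p̄)`. -/
theorem average_U_eq_U_centroid
    (Y : ι → Finset A) (hY : ∀ i, (Y i).Nonempty) (u : (ι → A) → ℝ)
    (cls : ι → κ) (hpi : PermInvariant Y u cls)
    (p : ι → A → ℝ) (hp : p ∈ Delta Y) :
    (Fintype.card ι : ℝ)⁻¹ *
        ∑ i, U u (Function.update (centroid cls p) i (p i))
      = U u (centroid cls p) :=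
  average_U_eq_U_centroid_general Y u cls hpi p hp

end ECFP
end
end

section
/- Let C be a permutation-invariant partition of the player set of a finite normal-form game with identical interests. Then the set of symmetric Nash equilibria relative to C is non-empty. -/
open MeasureTheory Filter Topology

noncomputable section

namespace ECFP

variable {ι A κ : Type*}

variable [Fintype ι] [DecidableEq ι] [Fintype A] [DecidableEq κ]

variable [Nonempty ι]


section AuxLemmas

lemma prod_update_eval (p : ι → A → ℝ) (i : ι) (v : A → ℝ) (y : ι → A) :
    ∏ k, Function.update p i v k (y k) = v (y i) * ∏ k ∈ Finset.univ.erase i, p k (y k) := by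
  rw [← Finset.mul_prod_erase Finset.univ (fun k => Function.update p i v k (y k))
    (Finset.mem_univ i)]
  simp only [Function.update_self]
  congr 1
  exact Finset.prod_congr rfl fun k hk => by
    rw [Function.update_of_ne (Finset.ne_of_mem_erase hk)]

lemma U_update_eq (u : (ι → A) → ℝ) (p : ι → A → ℝ) (i : ι) (v : A → ℝ) :
    U u (Function.update p i v)
      = ∑ y : ι → A, u y * (v (y i) * ∏ k ∈ Finset.univ.erase i, p k (y k)) :=
  Finset.sum_congr rfl fun y _ => by rw [prod_update_eval]

lemma U_update_sub (u : (ι → A) → ℝ) (p : ι → A → ℝ) (i : ι) (v w : A → ℝ) :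
    U u (Function.update p i (v - w))
      = U u (Function.update p i v) - U u (Function.update p i w) := by
  simp only [U_update_eq, Pi.sub_apply, ← Finset.sum_sub_distrib]
  exact Finset.sum_congr rfl fun y _ => by ring

lemma U_update_zero (u : (ι → A) → ℝ) (p : ι → A → ℝ) (i : ι) :
    U u (Function.update p i 0) = 0 := by
  simp [U_update_eq]

lemma swapStrat_eq_comp (y : ι → A) (i j : ι) :
    swapStrat y i j = y ∘ Equiv.swap i j := by
  funext k
  rcases eq_or_ne k j with rfl | hkj
  · simp [swapStrat, Equiv.swap_apply_right]
  · rcases eq_or_ne k i with rfl | hki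
    · simp [swapStrat, Function.update_of_ne hkj, Equiv.swap_apply_left]
    · simp [swapStrat, Function.update_of_ne hkj, Function.update_of_ne hki,
        Equiv.swap_apply_of_ne_of_ne hki hkj]

lemma swap_comp_involutive (i j : ι) :
    Function.Involutive (fun y : ι → A => y ∘ Equiv.swap i j) := by
  intro y; funext k; simp [Equiv.swap_apply_self]

lemma U_update_swap (Y : ι → Finset A) (u : (ι → A) → ℝ) (cls : ι → κ)
    (hpi : PermInvariant Y u cls) (p : ι → A → ℝ) (hp : p ∈ Delta Y)
    (hcc : classConst cls p) (i j : ι) (hij : cls i = cls j)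
    (q : A → ℝ) (hq : q ∈ simplex (Y i)) :
    U u (Function.update p j q) = U u (Function.update p i q) := by
  rcases eq_or_ne i j with rfl | hne
  · rfl
  have hpij : p i = p j := hcc i j hij
  have hprod : ∀ z : ι → A,
      ∏ k, Function.update p j q k ((z ∘ Equiv.swap i j) k)
        = ∏ k, Function.update p i q k (z k) := by
    intro z
    have hterm : ∀ k, Function.update p j q k ((z ∘ Equiv.swap i j) k)
        = (fun k => Function.update p i q k (z k)) (Equiv.swap i j k) := by
      intro k
      rcases eq_or_ne k i with rfl | hki
      · simp only [Function.comp_apply, Equiv.swap_apply_left,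
          Function.update_of_ne hne, Function.update_of_ne (Ne.symm hne), hpij]
      · rcases eq_or_ne k j with rfl | hkj
        · simp only [Function.comp_apply, Equiv.swap_apply_right, Function.update_self]
        · simp only [Function.comp_apply, Equiv.swap_apply_of_ne_of_ne hki hkj,
            Function.update_of_ne hki, Function.update_of_ne hkj]
    rw [Finset.prod_congr rfl fun k _ => hterm k,
      Equiv.prod_comp (Equiv.swap i j) (fun k => Function.update p i q k (z k))]
  refine (Fintype.sum_bijective (fun y : ι → A => y ∘ Equiv.swap i j)
    (swap_comp_involutive i j).bijective _ _ fun z => ?_).symm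
  by_cases hz : ∀ k, z k ∈ Y k
  · rw [hprod z]
    have hu : u (z ∘ Equiv.swap i j) = u z := by
      rw [← swapStrat_eq_comp]; exact (hpi i j hij).2 z hz
    rw [hu]
  · push_neg at hz
    obtain ⟨k, hk⟩ := hz
    have h0 : ∏ k, Function.update p i q k (z k) = 0 := by
      apply Finset.prod_eq_zero (Finset.mem_univ k)
      rcases eq_or_ne k i with rfl | hki
      · rw [Function.update_self]; exact hq.2.1 _ hk
      · rw [Function.update_of_ne hki]; exact (hp k).2.1 _ hk
    rw [hprod z, h0, mul_zero, mul_zero]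

lemma simplex_segment {Yi : Finset A} {a b : A → ℝ} (ha : a ∈ simplex Yi)
    (hb : b ∈ simplex Yi) {t : ℝ} (ht0 : 0 ≤ t) (ht1 : t ≤ 1) :
    a + t • (b - a) ∈ simplex Yi := by
  obtain ⟨ha0, haz, has⟩ := ha
  obtain ⟨hb0, hbz, hbs⟩ := hb
  refine ⟨fun x => ?_, fun x hx => ?_, ?_⟩
  · simp only [Pi.add_apply, Pi.smul_apply, Pi.sub_apply, smul_eq_mul]
    nlinarith [ha0 x, hb0 x, mul_nonneg (sub_nonneg.2 ht1) (ha0 x), mul_nonneg ht0 (hb0 x)]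
  · simp [haz x hx, hbz x hx]
  · simp only [Pi.add_apply, Pi.smul_apply, Pi.sub_apply, smul_eq_mul]
    have : ∑ x ∈ Yi, (a x + t * (b x - a x))
        = ∑ x ∈ Yi, a x + t * (∑ x ∈ Yi, b x - ∑ x ∈ Yi, a x) := by
      rw [Finset.sum_add_distrib, ← Finset.mul_sum, Finset.sum_sub_distrib]
    rw [this, has, hbs]; ring

lemma U_continuous (u : (ι → A) → ℝ) : Continuous (U (ι := ι) (A := A) u) := by
  unfold U
  refine continuous_finset_sum _ fun y _ => Continuous.mul continuous_const ?_
  exact continuous_finset_prod _ fun i _ => (continuous_apply (y i)).comp (continuous_apply i)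

lemma isClosed_simplex (Yi : Finset A) : IsClosed (simplex Yi) := by
  have h1 : IsClosed {p : A → ℝ | ∀ a, 0 ≤ p a} := by
    have : {p : A → ℝ | ∀ a, 0 ≤ p a} = ⋂ a, {p | 0 ≤ p a} := by
      ext; simp [Set.mem_iInter]
    rw [this]
    exact isClosed_iInter fun a => isClosed_le continuous_const (continuous_apply a)
  have h2 : IsClosed {p : A → ℝ | ∀ a, a ∉ Yi → p a = 0} := by
    have : {p : A → ℝ | ∀ a, a ∉ Yi → p a = 0}
        = ⋂ a, ⋂ (_ : a ∉ Yi), {p : A → ℝ | p a = 0} := by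
      ext; simp [Set.mem_iInter]
    rw [this]
    exact isClosed_iInter fun a => isClosed_iInter fun _ =>
      isClosed_eq (continuous_apply a) continuous_const
  have h3 : IsClosed {p : A → ℝ | ∑ a ∈ Yi, p a = 1} :=
    isClosed_eq (continuous_finset_sum _ fun a _ => continuous_apply a) continuous_const
  exact h1.inter (h2.inter h3)

end AuxLemmas

set_option maxHeartbeats 1000000

/-- The set of symmetric Nash equilibria relative to a permutation-invariant partition of an
identical-interests game is non-empty. -/
theorem SNE_nonempty
    (Y : ι → Finset A) (hY : ∀ i, (Y i).Nonempty) (u : (ι → A) → ℝ)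
    (cls : ι → κ) (hpi : PermInvariant Y u cls) :
    (SNE Y u cls).Nonempty := by
  classical
  set S : Set (ι → A → ℝ) := {p | p ∈ Delta Y ∧ classConst cls p} with hSdef
  -- S is contained in the unit ball
  have hSsub : S ⊆ Metric.closedBall 0 1 := by
    intro p hp
    rw [Metric.mem_closedBall, dist_zero_right]
    refine (pi_norm_le_iff_of_nonneg zero_le_one).2 fun i => ?_
    refine (pi_norm_le_iff_of_nonneg zero_le_one).2 fun a => ?_
    obtain ⟨h0, hz, hs⟩ := hp.1 i
    rw [Real.norm_eq_abs, abs_of_nonneg (h0 a)]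
    by_cases ha : a ∈ Y i
    · calc p i a ≤ ∑ b ∈ Y i, p i b := Finset.single_le_sum (fun b _ => h0 b) ha
        _ = 1 := hs
    · rw [hz a ha]; exact zero_le_one
  -- S is closed
  have hSclosed : IsClosed S := by
    have hD : IsClosed (Delta Y) := by
      have : Delta Y = ⋂ i, (fun p : ι → A → ℝ => p i) ⁻¹' simplex (Y i) := by
        ext; simp [Delta, Set.mem_iInter, Set.mem_preimage]
      rw [this]
      exact isClosed_iInter fun i => (isClosed_simplex (Y i)).preimage (continuous_apply i)
    have hC : IsClosed {p : ι → A → ℝ | classConst cls p} := by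
      have : {p : ι → A → ℝ | classConst cls p}
          = ⋂ i, ⋂ j, ⋂ (_ : cls i = cls j), {p : ι → A → ℝ | p i = p j} := by
        ext; simp [classConst, Set.mem_iInter]
      rw [this]
      exact isClosed_iInter fun i => isClosed_iInter fun j => isClosed_iInter fun _ =>
        isClosed_eq (continuous_apply i) (continuous_apply j)
    exact hD.inter hC
  have hScomp : IsCompact S :=
    (isCompact_closedBall (0 : ι → A → ℝ) 1).of_isClosed_subset hSclosed hSsub
  -- S is nonempty: uniform strategies
  have hSne : S.Nonempty := by
    refine ⟨fun i a => if a ∈ Y i then ((Y i).card : ℝ)⁻¹ else 0, fun i => ?_, ?_⟩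
    · refine ⟨fun a => ?_, fun a ha => if_neg ha, ?_⟩
      · dsimp only; split_ifs
        · positivity
        · exact le_refl 0
      · have hcard : ((Y i).card : ℝ) ≠ 0 :=
          Nat.cast_ne_zero.2 (Finset.card_ne_zero_of_mem (hY i).choose_spec)
        rw [Finset.sum_congr rfl fun a ha => if_pos ha, Finset.sum_const, nsmul_eq_mul,
          mul_inv_cancel₀ hcard]
    · intro i j hij
      have hYij : Y i = Y j := (hpi i j hij).1
      funext a; simp only [hYij]
  -- maximizer of U over S
  obtain ⟨p, hpS, hmax⟩ := hScomp.exists_isMaxOn hSne (U_continuous u).continuousOn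
  refine ⟨p, ⟨⟨hpS.1, ?_⟩, hpS.2⟩⟩
  intro i q hq
  -- the deformation direction
  set d : ι → A → ℝ := (fun j => if cls j = cls i then q - p i else 0) with hd
  -- the deformed profile stays in S
  have hpath : ∀ t : ℝ, 0 ≤ t → t ≤ 1 → p + t • d ∈ S := by
    intro t ht0 ht1
    constructor
    · intro j
      by_cases hj : cls j = cls i
      · have hYji : Y j = Y i := (hpi j i hj).1
        have hpji : p j = p i := hpS.2 j i hj
        have hb : q ∈ simplex (Y j) := by rw [hYji]; exact hq
        have hseg := simplex_segment (hpS.1 j) hb ht0 ht1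
        have hjq : (p + t • d) j = p j + t • (q - p j) := by
          funext a
          simp only [Pi.add_apply, Pi.smul_apply, hd, if_pos hj, Pi.sub_apply, smul_eq_mul,
            hpji]
        rw [hjq]; exact hseg
      · have : (p + t • d) j = p j := by
          funext a; simp [hd, hj]
        rw [this]; exact hpS.1 j
    · intro j k hjk
      have hd2 : d j = d k := by
        simp only [hd]; rw [hjk]
      have hp2 : p j = p k := hpS.2 j k hjk
      simp only [Pi.add_apply, Pi.smul_apply, hp2, hd2]
  -- derivative of t ↦ U(p + t d) at 0
  set D : ℝ := U u (Function.update p i q) - U u p with hD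
  set m : ℕ := (cluster cls i).card with hm
  have hm1 : 1 ≤ m := by
    rw [hm]
    exact Finset.card_pos.2 ⟨i, by simp [cluster]⟩
  have hUform : ∀ t : ℝ, U u (p + t • d)
      = ∑ y : ι → A, u y * ∏ k, (p k (y k) + t * d k (y k)) := by
    intro t; rfl
  have hderiv : HasDerivAt (fun t : ℝ => U u (p + t • d)) ((m : ℝ) * D) 0 := by
    have h1 : HasDerivAt
        (fun t : ℝ => ∑ y : ι → A, u y * ∏ k, (p k (y k) + t * d k (y k)))
        (∑ y : ι → A, u y *
          ∑ k, (∏ l ∈ Finset.univ.erase k, (p l (y l) + 0 * d l (y l))) • d k (y k)) 0 := by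
      apply HasDerivAt.fun_sum
      intro y _
      refine HasDerivAt.const_mul (u y) ?_
      exact HasDerivAt.fun_finset_prod fun k _ =>
        (hasDerivAt_mul_const (d k (y k))).const_add (p k (y k))
    have h2 : (fun t : ℝ => U u (p + t • d))
        = fun t : ℝ => ∑ y : ι → A, u y * ∏ k, (p k (y k) + t * d k (y k)) :=
      funext hUform
    rw [h2]
    convert h1 using 1
    -- value computation
    have step1 : ∀ y : ι → A,
        u y * ∑ k, (∏ l ∈ Finset.univ.erase k, (p l (y l) + 0 * d l (y l))) • d k (y k)
          = ∑ k, u y * (d k (y k) * ∏ l ∈ Finset.univ.erase k, p l (y l)) := by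
      intro y
      rw [Finset.mul_sum]
      refine Finset.sum_congr rfl fun k _ => ?_
      simp only [zero_mul, add_zero, smul_eq_mul]
      ring
    rw [Finset.sum_congr rfl fun y _ => step1 y, Finset.sum_comm]
    have step2 : ∀ k : ι,
        (∑ y : ι → A, u y * (d k (y k) * ∏ l ∈ Finset.univ.erase k, p l (y l)))
          = U u (Function.update p k (d k)) := fun k => (U_update_eq u p k (d k)).symm
    rw [Finset.sum_congr rfl fun k _ => step2 k]
    have step3 : ∀ k : ι, U u (Function.update p k (d k))
        = if cls k = cls i then D else 0 := by
      intro k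
      by_cases hk : cls k = cls i
      · rw [if_pos hk]
        have hpki : p k = p i := hpS.2 k i hk
        have hdk : d k = q - p k := by simp only [hd, if_pos hk, hpki]
        rw [hdk, U_update_sub, Function.update_eq_self,
          U_update_swap Y u cls hpi p hpS.1 hpS.2 i k hk.symm q hq, hD]
      · rw [if_neg hk]
        have hdk : d k = 0 := by simp only [hd, if_neg hk]
        rw [hdk, U_update_zero]
    rw [Finset.sum_congr rfl fun k _ => step3 k, ← Finset.sum_filter, ← cluster,
      Finset.sum_const, nsmul_eq_mul, hm]
  -- the derivative must be nonpositive since p is a maximizer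
  have hmD : (m : ℝ) * D ≤ 0 := by
    have hW : HasDerivWithinAt (fun t : ℝ => U u (p + t • d)) ((m : ℝ) * D)
        (Set.Ioi 0) 0 := hderiv.hasDerivWithinAt
    rw [hasDerivWithinAt_iff_tendsto_slope,
      Set.diff_singleton_eq_self (by simp : (0:ℝ) ∉ Set.Ioi (0:ℝ))] at hW
    refine le_of_tendsto hW ?_
    have hlt : ∀ᶠ t in 𝓝[Set.Ioi (0:ℝ)] 0, t < 1 :=
      ((isOpen_Iio.eventually_mem (show (0:ℝ) ∈ Set.Iio 1 by norm_num)).filter_mono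
        nhdsWithin_le_nhds)
    filter_upwards [eventually_mem_nhdsWithin, hlt] with t ht htl
    have ht0 : 0 < t := ht
    have hft : U u (p + t • d) ≤ U u p := hmax (hpath t ht0.le htl.le)
    have hf0 : U u (p + (0:ℝ) • d) = U u p := by rw [zero_smul, add_zero]
    rw [slope_def_field]
    apply div_nonpos_of_nonpos_of_nonneg
    · rw [hf0]; linarith
    · linarith
  have hDle : D ≤ 0 := by
    have hmpos : (0:ℝ) < (m : ℝ) := by exact_mod_cast hm1
    nlinarith
  rw [hD] at hDle
  linarith


end ECFP
end
end

section
/- Let C be a permutation-invariant partition of the player set of a finite normal-form game with identical interests, and let q̄^c : [0,∞) → Δ^n be a solution of the centroid CT-ECFP differential inclusion ẏ ∈ BR(y) − y taking values in the set of centroid (class-constant) distributions. Then the function w(t) = U(q̄^c(t)) is nondecreasing in t. -/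
open MeasureTheory Filter Topology

noncomputable section

namespace ECFP

variable {ι A κ : Type*}

variable [Fintype ι] [DecidableEq ι] [Fintype A] [DecidableEq κ]

section AuxLemmas

lemma mem_simplex_bounds {Y : Finset A} {p : A → ℝ} (hp : p ∈ simplex Y) (a : A) :
    0 ≤ p a ∧ p a ≤ 1 := by
  obtain ⟨h0, hz, hs⟩ := hp
  refine ⟨h0 a, ?_⟩
  by_cases ha : a ∈ Y
  · calc p a ≤ ∑ b ∈ Y, p b := Finset.single_le_sum (fun b _ => h0 b) ha
      _ = 1 := hs
  · simp [hz a ha]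

lemma abs_prod_sub_prod_le (S : Finset ι) (f h : ι → ℝ)
    (hf : ∀ j ∈ S, |f j| ≤ 1) (hh : ∀ j ∈ S, |h j| ≤ 1) :
    |∏ j ∈ S, f j - ∏ j ∈ S, h j| ≤ ∑ j ∈ S, |f j - h j| := by
  classical
  induction S using Finset.induction_on with
  | empty => simp
  | @insert i S hiS ih =>
    rw [Finset.prod_insert hiS, Finset.prod_insert hiS, Finset.sum_insert hiS]
    have hPf : |∏ j ∈ S, f j| ≤ 1 := by
      rw [Finset.abs_prod]
      exact Finset.prod_le_one (fun j _ => abs_nonneg _)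
        (fun j hj => hf j (Finset.mem_insert_of_mem hj))
    have hPh : |∏ j ∈ S, h j| ≤ 1 := by
      rw [Finset.abs_prod]
      exact Finset.prod_le_one (fun j _ => abs_nonneg _)
        (fun j hj => hh j (Finset.mem_insert_of_mem hj))
    have hfi : |f i| ≤ 1 := hf i (Finset.mem_insert_self i S)
    have ihS : |∏ j ∈ S, f j - ∏ j ∈ S, h j| ≤ ∑ j ∈ S, |f j - h j| :=
      ih (fun j hj => hf j (Finset.mem_insert_of_mem hj))
        (fun j hj => hh j (Finset.mem_insert_of_mem hj))
    have key : f i * ∏ j ∈ S, f j - h i * ∏ j ∈ S, h j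
        = f i * (∏ j ∈ S, f j - ∏ j ∈ S, h j) + (f i - h i) * ∏ j ∈ S, h j := by ring
    rw [key]
    calc |f i * (∏ j ∈ S, f j - ∏ j ∈ S, h j) + (f i - h i) * ∏ j ∈ S, h j|
        ≤ |f i * (∏ j ∈ S, f j - ∏ j ∈ S, h j)| + |(f i - h i) * ∏ j ∈ S, h j| :=
          abs_add_le _ _
      _ = |f i| * |∏ j ∈ S, f j - ∏ j ∈ S, h j| + |f i - h i| * |∏ j ∈ S, h j| := by
          rw [abs_mul, abs_mul]
      _ ≤ 1 * (∑ j ∈ S, |f j - h j|) + |f i - h i| * 1 := by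
          gcongr
      _ = |f i - h i| + ∑ j ∈ S, |f j - h j| := by ring

/-- The mixed utility as a function that is literally linear in player `i`'s component. -/
def Ulin (u : (ι → A) → ℝ) (p : ι → A → ℝ) (i : ι) (v : A → ℝ) : ℝ :=
  ∑ y : ι → A, u y * (v (y i) * ∏ j ∈ Finset.univ.erase i, p j (y j))

lemma U_update_s10 (u : (ι → A) → ℝ) (p : ι → A → ℝ) (i : ι) (v : A → ℝ) :
    U u (Function.update p i v) = Ulin u p i v := by
  unfold U Ulin
  refine Finset.sum_congr rfl fun y _ => ?_
  congr 1
  have hpt : ∀ j, Function.update p i v j (y j)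
      = Function.update (fun j => p j (y j)) i (v (y i)) j := by
    intro j
    rcases eq_or_ne j i with rfl | hj
    · simp
    · simp [Function.update_of_ne hj]
  rw [Finset.prod_congr rfl (fun j _ => hpt j),
    Finset.prod_update_of_mem (Finset.mem_univ i), Finset.sdiff_singleton_eq_erase]

lemma Ulin_sub (u : (ι → A) → ℝ) (p : ι → A → ℝ) (i : ι) (v w : A → ℝ) :
    Ulin u p i v - Ulin u p i w = Ulin u p i (v - w) := by
  unfold Ulin
  rw [← Finset.sum_sub_distrib]
  exact Finset.sum_congr rfl fun y _ => by simp only [Pi.sub_apply]; ring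

lemma Ulin_diff_le (u : (ι → A) → ℝ) (p p' : ι → A → ℝ) (i : ι) (v : A → ℝ)
    (hp : ∀ j a, |p j a| ≤ 1) (hp' : ∀ j a, |p' j a| ≤ 1) (hv : ∀ a, |v a| ≤ 1)
    (δ : ℝ) (hδ0 : 0 ≤ δ) (hδ : ∀ j a, |p j a - p' j a| ≤ δ) :
    |Ulin u p i v - Ulin u p' i v|
      ≤ (∑ y : ι → A, |u y|) * ((Fintype.card ι : ℝ) * δ) := by
  unfold Ulin
  rw [← Finset.sum_sub_distrib]
  calc |∑ y : ι → A, (u y * (v (y i) * ∏ j ∈ Finset.univ.erase i, p j (y j))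
          - u y * (v (y i) * ∏ j ∈ Finset.univ.erase i, p' j (y j)))|
      ≤ ∑ y : ι → A, |u y * (v (y i) * ∏ j ∈ Finset.univ.erase i, p j (y j))
          - u y * (v (y i) * ∏ j ∈ Finset.univ.erase i, p' j (y j))| :=
        Finset.abs_sum_le_sum_abs _ _
    _ ≤ ∑ y : ι → A, |u y| * ((Fintype.card ι : ℝ) * δ) := by
        refine Finset.sum_le_sum fun y _ => ?_
        have h1 : u y * (v (y i) * ∏ j ∈ Finset.univ.erase i, p j (y j))
            - u y * (v (y i) * ∏ j ∈ Finset.univ.erase i, p' j (y j))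
            = u y * v (y i) * (∏ j ∈ Finset.univ.erase i, p j (y j)
              - ∏ j ∈ Finset.univ.erase i, p' j (y j)) := by ring
        rw [h1, abs_mul, abs_mul]
        have h2 : |∏ j ∈ Finset.univ.erase i, p j (y j)
            - ∏ j ∈ Finset.univ.erase i, p' j (y j)|
            ≤ ∑ j ∈ Finset.univ.erase i, |p j (y j) - p' j (y j)| :=
          abs_prod_sub_prod_le _ _ _ (fun j _ => hp j (y j)) (fun j _ => hp' j (y j))
        have h3 : ∑ j ∈ Finset.univ.erase i, |p j (y j) - p' j (y j)|
            ≤ (Fintype.card ι : ℝ) * δ := by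
          calc ∑ j ∈ Finset.univ.erase i, |p j (y j) - p' j (y j)|
              ≤ ∑ _j ∈ Finset.univ.erase i, δ := Finset.sum_le_sum fun j _ => hδ j (y j)
            _ = ((Finset.univ.erase i).card : ℝ) * δ := by
                rw [Finset.sum_const, nsmul_eq_mul]
            _ ≤ (Fintype.card ι : ℝ) * δ := by
                have : (Finset.univ.erase i).card ≤ Fintype.card ι :=
                  le_trans (Finset.card_erase_le) (le_of_eq (Finset.card_univ))
                exact mul_le_mul_of_nonneg_right (by exact_mod_cast this) hδ0
        calc |u y| * |v (y i)| * |∏ j ∈ Finset.univ.erase i, p j (y j)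
              - ∏ j ∈ Finset.univ.erase i, p' j (y j)|
            ≤ |u y| * 1 * ((Fintype.card ι : ℝ) * δ) :=
              mul_le_mul (mul_le_mul le_rfl (hv (y i)) (abs_nonneg _) (abs_nonneg _))
                (le_trans h2 h3) (abs_nonneg _) (by positivity)
          _ = |u y| * ((Fintype.card ι : ℝ) * δ) := by ring
    _ = (∑ y : ι → A, |u y|) * ((Fintype.card ι : ℝ) * δ) := by
        rw [← Finset.sum_mul]

end AuxLemmas

variable [Nonempty ι]

lemma key_estimate (Y : ι → Finset A) (u : (ι → A) → ℝ)
    (x g : ℝ → ι → A → ℝ)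
    (hmem : ∀ t : ℝ, 0 ≤ t → x t ∈ Delta Y)
    (hgint : LocallyIntegrableOn g (Set.Ici (0:ℝ)) volume)
    (hgae : ∀ᵐ r ∂(volume.restrict (Set.Ici (0:ℝ))), g r ∈ Fcent Y u (x r))
    (hgrep : ∀ t : ℝ, 0 ≤ t → x t = x 0 + ∫ r in Set.Ioc (0:ℝ) t, g r)
    (s t : ℝ) (hs : 0 ≤ s) (hst : s ≤ t) :
    U u (x s) - U u (x t)
      ≤ ((Fintype.card ι : ℝ) ^ 2 * ∑ y : ι → A, |u y|) * (t - s) ^ 2 := by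
  classical
  have ht0 : (0:ℝ) ≤ t := le_trans hs hst
  have hδ0 : (0:ℝ) ≤ t - s := by linarith
  have hB0 : (0:ℝ) ≤ ∑ y : ι → A, |u y| := Finset.sum_nonneg fun y _ => abs_nonneg _
  have hxb : ∀ r : ℝ, 0 ≤ r → ∀ i a, 0 ≤ x r i a ∧ x r i a ≤ 1 :=
    fun r hr i a => mem_simplex_bounds (hmem r hr i) a
  have hIoc : ∀ s' t' : ℝ, 0 ≤ s' → IntegrableOn g (Set.Ioc s' t') volume := by
    intro s' t' hs'
    exact (hgint.integrableOn_compact_subset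
      (fun r hr => Set.mem_Ici.mpr (le_trans hs' hr.1)) isCompact_Icc).mono_set
      Set.Ioc_subset_Icc_self
  have hIocc : ∀ (s' t' : ℝ), 0 ≤ s' → ∀ (i : ι) (a : A),
      IntegrableOn (fun r => g r i a) (Set.Ioc s' t') volume := by
    intro s' t' hs' i a
    exact ((ContinuousLinearMap.proj (R := ℝ) (φ := fun _ : A => ℝ) a).comp
      (ContinuousLinearMap.proj (R := ℝ) (φ := fun _ : ι => A → ℝ) i)).integrable_comp
      (hIoc s' t' hs')
  have hsplit : ∀ s' t' : ℝ, 0 ≤ s' → s' ≤ t' → ∀ i a,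
      x t' i a - x s' i a = ∫ r in Set.Ioc s' t', g r i a := by
    intro s' t' hs' hst' i a
    have hunion : ∫ r in Set.Ioc (0:ℝ) t', g r
        = (∫ r in Set.Ioc (0:ℝ) s', g r) + ∫ r in Set.Ioc s' t', g r := by
      rw [← MeasureTheory.setIntegral_union (Set.Ioc_disjoint_Ioc_of_le le_rfl) measurableSet_Ioc
        (hIoc 0 s' le_rfl) (hIoc s' t' hs'), Set.Ioc_union_Ioc_eq_Ioc hs' hst']
    have hfun : x t' - x s' = ∫ r in Set.Ioc s' t', g r := by
      rw [hgrep t' (le_trans hs' hst'), hgrep s' hs', hunion]; abel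
    have happ := congrFun (congrFun hfun i) a
    rw [Pi.sub_apply, Pi.sub_apply] at happ
    rw [happ]
    exact (ContinuousLinearMap.integral_comp_comm
      ((ContinuousLinearMap.proj (R := ℝ) (φ := fun _ : A => ℝ) a).comp
        (ContinuousLinearMap.proj (R := ℝ) (φ := fun _ : ι => A → ℝ) i))
      (hIoc s' t' hs')).symm
  have haeF : ∀ s' t' : ℝ, 0 ≤ s' → (∀ᵐ r ∂volume.restrict (Set.Ioc s' t'),
      g r ∈ Fcent Y u (x r)) := fun s' t' hs' =>
    ae_restrict_of_ae_restrict_of_subset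
      (fun r hr => Set.mem_Ici.mpr (le_trans hs' (le_of_lt hr.1))) hgae
  have haeB : ∀ s' t' : ℝ, 0 ≤ s' → (∀ᵐ r ∂volume.restrict (Set.Ioc s' t'),
      ∀ i a, |g r i a| ≤ 1) := by
    intro s' t' hs'
    filter_upwards [haeF s' t' hs', MeasureTheory.ae_restrict_mem measurableSet_Ioc]
      with r hr hrm i a
    obtain ⟨b, hb, hgb⟩ := hr
    have hr0 : (0:ℝ) ≤ r := le_trans hs' (le_of_lt hrm.1)
    have hxa := mem_simplex_bounds (hmem r hr0 i) a
    have hba := mem_simplex_bounds ((hb i).1) a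
    have hgr : g r i a = b i a - x r i a := by rw [← hgb]; rfl
    rw [hgr, abs_le]
    constructor <;> linarith [hxa.1, hxa.2, hba.1, hba.2]
  have hLip : ∀ s' t' : ℝ, 0 ≤ s' → s' ≤ t' → ∀ i a,
      |x t' i a - x s' i a| ≤ t' - s' := by
    intro s' t' hs' hst' i a
    rw [hsplit s' t' hs' hst' i a]
    have h1 : |∫ r in Set.Ioc s' t', g r i a| ≤ ∫ r in Set.Ioc s' t', |g r i a| := by
      simpa [Real.norm_eq_abs] using MeasureTheory.norm_integral_le_integral_norm
        (μ := volume.restrict (Set.Ioc s' t')) (fun r => g r i a)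
    have h2 : ∫ r in Set.Ioc s' t', |g r i a| ≤ ∫ _r in Set.Ioc s' t', (1:ℝ) := by
      refine MeasureTheory.integral_mono_ae (hIocc s' t' hs' i a).abs
        ((MeasureTheory.integrableOn_const_iff (by simp)).2 (Or.inr measure_Ioc_lt_top)) ?_
      filter_upwards [haeB s' t' hs'] with r hr using hr i a
    have h3 : ∫ _r in Set.Ioc s' t', (1:ℝ) = t' - s' := by
      rw [MeasureTheory.setIntegral_const, Real.volume_real_Ioc_of_le hst', smul_eq_mul, mul_one]
    linarith
  -- enumeration of the players and the hybrid profiles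
  obtain ⟨e⟩ : Nonempty (ι ≃ Fin (Fintype.card ι)) := ⟨Fintype.equivFin ι⟩
  set Q : ℕ → ι → A → ℝ := fun k i => if (e i : ℕ) < k then x t i else x s i with hQdef
  have hQ0 : Q 0 = x s := by funext i; simp [hQdef]
  have hQn : Q (Fintype.card ι) = x t := by funext i; simp [hQdef, (e i).isLt]
  have hQmem : ∀ k j a, |Q k j a| ≤ 1 := by
    intro k j a
    have h1 := hxb t ht0 j a
    have h2 := hxb s hs j a
    by_cases hcase : (e j : ℕ) < k
    · simp only [hQdef, if_pos hcase]; rw [abs_le]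
      constructor <;> linarith [h1.1, h1.2]
    · simp only [hQdef, if_neg hcase]; rw [abs_le]
      constructor <;> linarith [h2.1, h2.2]
  have hk : ∀ k, k < Fintype.card ι →
      -((∑ y : ι → A, |u y|) * ((Fintype.card ι : ℝ) * (t-s)) * (t-s))
        ≤ U u (Q (k+1)) - U u (Q k) := by
    intro k hkn
    set i₀ : ι := e.symm ⟨k, hkn⟩ with hi₀
    have hei₀ : (e i₀ : ℕ) = k := by rw [hi₀, Equiv.apply_symm_apply]
    have hQk_self : Function.update (Q k) i₀ (x s i₀) = Q k := by
      funext j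
      rcases eq_or_ne j i₀ with rfl | hj
      · rw [Function.update_self]
        simp only [hQdef, hei₀]
        rw [if_neg (lt_irrefl k)]
      · rw [Function.update_of_ne hj]
    have hQk_succ : Function.update (Q k) i₀ (x t i₀) = Q (k+1) := by
      funext j
      rcases eq_or_ne j i₀ with rfl | hj
      · rw [Function.update_self]
        simp only [hQdef, hei₀]
        rw [if_pos (Nat.lt_succ_self k)]
      · rw [Function.update_of_ne hj]
        have hne : (e j : ℕ) ≠ k := fun hh => hj (by
          have hfin : e j = ⟨k, hkn⟩ := Fin.ext hh
          rw [hi₀, ← hfin, Equiv.symm_apply_apply])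
        simp only [hQdef]
        rcases lt_or_ge (e j : ℕ) k with hlt | hge
        · rw [if_pos hlt, if_pos (Nat.lt_succ_of_lt hlt)]
        · rw [if_neg (not_lt.mpr hge), if_neg (by omega)]
    have hdecomp : U u (Q (k+1)) - U u (Q k)
        = Ulin u (Q k) i₀ (x t i₀ - x s i₀) := by
      have e1 : U u (Q (k+1)) = Ulin u (Q k) i₀ (x t i₀) := by
        rw [← hQk_succ, U_update_s10]
      have e2 : U u (Q k) = Ulin u (Q k) i₀ (x s i₀) := by
        conv_lhs => rw [← hQk_self]
        rw [U_update_s10]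
      rw [e1, e2, Ulin_sub]
    have hint : ∀ y : ι → A, IntegrableOn
        (fun r => u y * (g r i₀ (y i₀) * ∏ j ∈ Finset.univ.erase i₀, Q k j (y j)))
        (Set.Ioc s t) volume := fun y =>
      ((hIocc s t hs i₀ (y i₀)).mul_const _).const_mul _
    have hUlin_int : Ulin u (Q k) i₀ (x t i₀ - x s i₀)
        = ∫ r in Set.Ioc s t, Ulin u (Q k) i₀ (g r i₀) := by
      unfold Ulin
      rw [MeasureTheory.integral_finset_sum _ (fun y _ => hint y)]
      refine Finset.sum_congr rfl fun y _ => ?_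
      rw [Pi.sub_apply, hsplit s t hs hst i₀ (y i₀), ← MeasureTheory.integral_mul_const,
        ← MeasureTheory.integral_const_mul]
    have hptws : ∀ᵐ r ∂volume.restrict (Set.Ioc s t),
        -((∑ y : ι → A, |u y|) * ((Fintype.card ι : ℝ) * (t-s)))
          ≤ Ulin u (Q k) i₀ (g r i₀) := by
      filter_upwards [haeF s t hs, MeasureTheory.ae_restrict_mem measurableSet_Ioc,
        haeB s t hs] with r hr hrm hrb
      obtain ⟨b, hb, hgb⟩ := hr
      have hr0 : (0:ℝ) ≤ r := le_trans hs (le_of_lt hrm.1)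
      have hgr : g r i₀ = b i₀ - x r i₀ := by rw [← hgb]; rfl
      have hnn : 0 ≤ Ulin u (x r) i₀ (g r i₀) := by
        have hbr := (hb i₀).2 (x r i₀) (hmem r hr0 i₀)
        rw [sub_zero] at hbr
        have h1 : Ulin u (x r) i₀ (g r i₀)
            = U u (Function.update (x r) i₀ (b i₀))
              - U u (Function.update (x r) i₀ (x r i₀)) := by
          rw [U_update_s10, U_update_s10, Ulin_sub, hgr]
        rw [h1]; linarith
      have hxr1 : ∀ j a, |x r j a| ≤ 1 := by
        intro j a
        have hb2 := hxb r hr0 j a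
        rw [abs_le]; constructor <;> linarith [hb2.1, hb2.2]
      have hδb : ∀ j a, |Q k j a - x r j a| ≤ t - s := by
        intro j a
        by_cases hcase : (e j : ℕ) < k
        · simp only [hQdef, if_pos hcase]
          exact le_trans (hLip r t hr0 hrm.2 j a) (by linarith [hrm.1])
        · simp only [hQdef, if_neg hcase]
          rw [abs_sub_comm]
          exact le_trans (hLip s r hs (le_of_lt hrm.1) j a) (by linarith [hrm.2])
      have hd := Ulin_diff_le u (Q k) (x r) i₀ (g r i₀) (fun j a => hQmem k j a) hxr1
        (fun a => hrb i₀ a) (t - s) hδ0 hδb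
      rw [abs_le] at hd
      linarith [hd.1, hnn]
    have hUlin_integrable : IntegrableOn (fun r => Ulin u (Q k) i₀ (g r i₀))
        (Set.Ioc s t) volume := by
      unfold Ulin
      exact MeasureTheory.integrable_finset_sum _ (fun y _ => hint y)
    have hIneq : ∫ _r in Set.Ioc s t,
          (-((∑ y : ι → A, |u y|) * ((Fintype.card ι : ℝ) * (t-s))))
        ≤ ∫ r in Set.Ioc s t, Ulin u (Q k) i₀ (g r i₀) :=
      MeasureTheory.integral_mono_ae
        ((MeasureTheory.integrableOn_const_iff enorm_ne_top).2 (Or.inr measure_Ioc_lt_top))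
        hUlin_integrable hptws
    have hconst : ∫ _r in Set.Ioc s t,
          (-((∑ y : ι → A, |u y|) * ((Fintype.card ι : ℝ) * (t-s))))
        = -((∑ y : ι → A, |u y|) * ((Fintype.card ι : ℝ) * (t-s)) * (t-s)) := by
      rw [MeasureTheory.setIntegral_const, Real.volume_real_Ioc_of_le hst, smul_eq_mul]
      ring
    rw [hdecomp, hUlin_int]
    rw [hconst] at hIneq
    exact hIneq
  have htel : U u (x t) - U u (x s)
      = ∑ k ∈ Finset.range (Fintype.card ι), (U u (Q (k+1)) - U u (Q k)) := by
    rw [Finset.sum_range_sub (fun k => U u (Q k)), hQ0, hQn]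
  have hsum : ((Fintype.card ι : ℝ))
        * (-((∑ y : ι → A, |u y|) * ((Fintype.card ι : ℝ) * (t-s)) * (t-s)))
      ≤ ∑ k ∈ Finset.range (Fintype.card ι), (U u (Q (k+1)) - U u (Q k)) := by
    calc ((Fintype.card ι : ℝ))
          * (-((∑ y : ι → A, |u y|) * ((Fintype.card ι : ℝ) * (t-s)) * (t-s)))
        = ∑ _k ∈ Finset.range (Fintype.card ι),
            (-((∑ y : ι → A, |u y|) * ((Fintype.card ι : ℝ) * (t-s)) * (t-s))) := by
          rw [Finset.sum_const, Finset.card_range, nsmul_eq_mul]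
      _ ≤ _ := Finset.sum_le_sum fun k hk' => hk k (Finset.mem_range.mp hk')
  have hRHS : ((Fintype.card ι : ℝ))
        * (-((∑ y : ι → A, |u y|) * ((Fintype.card ι : ℝ) * (t-s)) * (t-s)))
      = -(((Fintype.card ι : ℝ) ^ 2 * ∑ y : ι → A, |u y|) * (t - s) ^ 2) := by ring
  rw [hRHS] at hsum
  linarith [htel, hsum]


/-- Along any class-constant-valued solution of the centroid CT-ECFP inclusion
`ẏ ∈ BR(y) − y`, the function `w(t) = U(q̄^c(t))` is nondecreasing. -/
theorem U_nondecreasing_along_centroid_solution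
    (Y : ι → Finset A) (hY : ∀ i, (Y i).Nonempty) (u : (ι → A) → ℝ)
    (cls : ι → κ) (hpi : PermInvariant Y u cls)
    (x : ℝ → ι → A → ℝ) (hx : IsSolution Y (Fcent Y u) x)
    (hcc : ∀ t : ℝ, 0 ≤ t → classConst cls (x t)) :
    ∀ s t : ℝ, 0 ≤ s → s ≤ t → U u (x s) ≤ U u (x t) := by
  classical
  obtain ⟨hmem, g, hgint, hgae, hgrep⟩ := hx
  intro s t hs hst
  have key := fun (s' t' : ℝ) (hs' : (0:ℝ) ≤ s') (hst' : s' ≤ t') =>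
    key_estimate Y u x g hmem hgint hgae hgrep s' t' hs' hst'
  set C : ℝ := (Fintype.card ι : ℝ) ^ 2 * ∑ y : ι → A, |u y| with hCdef
  have hN : ∀ N : ℕ, 0 < N → U u (x s) - U u (x t) ≤ C * (t-s)^2 / N := by
    intro N hNpos
    have hNne : (N:ℝ) ≠ 0 := Nat.cast_ne_zero.mpr hNpos.ne'
    set h : ℝ := (t - s) / N with hhdef
    have hh0 : (0:ℝ) ≤ h := by
      rw [hhdef]; exact div_nonneg (by linarith) (Nat.cast_nonneg N)
    have hstep : ∀ j : ℕ,
        U u (x (s + (j:ℝ)*h)) - U u (x (s + ((j+1:ℕ):ℝ)*h)) ≤ C * h^2 := by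
      intro j
      have hcast : ((j+1:ℕ):ℝ) = (j:ℝ)+1 := by push_cast; ring
      rw [hcast]
      have h0j : (0:ℝ) ≤ s + (j:ℝ)*h := add_nonneg hs (mul_nonneg (Nat.cast_nonneg j) hh0)
      have h1j : s + (j:ℝ)*h ≤ s + ((j:ℝ)+1)*h := by nlinarith
      have h2 := key (s + (j:ℝ)*h) (s + ((j:ℝ)+1)*h) h0j h1j
      have h3 : (s + ((j:ℝ)+1)*h) - (s + (j:ℝ)*h) = h := by ring
      rw [h3] at h2
      rw [hCdef]
      exact h2
    have hend : s + (N:ℝ)*h = t := by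
      rw [hhdef]; field_simp; ring
    have htel2 : U u (x s) - U u (x (s + (N:ℝ)*h))
        = ∑ j ∈ Finset.range N,
            (U u (x (s + (j:ℝ)*h)) - U u (x (s + ((j+1:ℕ):ℝ)*h))) := by
      rw [Finset.sum_range_sub' (fun j => U u (x (s + (j:ℝ)*h)))]
      norm_num
    have hmain : U u (x s) - U u (x t) ≤ (N:ℝ) * (C * h^2) := by
      rw [← hend, htel2]
      calc ∑ j ∈ Finset.range N,
            (U u (x (s + (j:ℝ)*h)) - U u (x (s + ((j+1:ℕ):ℝ)*h)))
          ≤ ∑ _j ∈ Finset.range N, C * h^2 := Finset.sum_le_sum fun j _ => hstep j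
        _ = (N:ℝ) * (C * h^2) := by
            rw [Finset.sum_const, Finset.card_range, nsmul_eq_mul]
    have heq : (N:ℝ) * (C * h^2) = C * (t-s)^2 / N := by
      rw [hhdef]; field_simp
    linarith
  have htend : Tendsto (fun N : ℕ => C * (t-s)^2 / N) atTop (𝓝 0) :=
    tendsto_const_div_atTop_nhds_zero_nat _
  have hle : U u (x s) - U u (x t) ≤ 0 := by
    refine ge_of_tendsto htend ?_
    filter_upwards [Filter.eventually_gt_atTop 0] with N hN'
    exact hN N hN'
  linarith

end ECFP
end
end

section
/- Let C be a permutation-invariant partition of the player set of a finite normal-form game with identical interests, and let q̄^c : [0,∞) → Δ^n be a solution of the centroid CT-ECFP differential inclusion ẏ ∈ BR(y) − y taking values in the set of centroid (class-constant) distributions. Then for any nondegenerate interval T ⊆ [0,∞), the function t ↦ U(q̄^c(t)) is constant on T if and only if q̄^c(t) ∈ SNE for every t ∈ T. -/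
open MeasureTheory Filter Topology

noncomputable section

namespace ECFP

variable {ι A κ : Type*}

variable [Fintype ι] [DecidableEq ι] [Fintype A] [DecidableEq κ]

/-!
Along `ẏ = b - y` with `b ∈ BR(y)`, multilinearity of `U` gives
`d/dt U(y(t)) = ∑ᵢ (U(bᵢ, y₋ᵢ) - U(y))` for a.e. `t`. Each summand is `≥ 0` because `yᵢ` is
itself a feasible deviation, and all vanish exactly when `y(t)` is a Nash equilibrium.
`U ∘ y` is a polynomial in the absolutely continuous coordinates of `y`, hence absolutely
continuous, so it is constant on an interval iff this derivative vanishes a.e. there. Vanishing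
a.e. yields the Nash property at every time because `NE` is closed and `y` is continuous; class
constancy holds along the whole trajectory by assumption.
-/

section AbsolutelyContinuous

open Set

variable {X : Type*} [PseudoMetricSpace X] {a b : ℝ}

theorem _root_.absolutelyContinuousOnInterval_const (c : X) :
    AbsolutelyContinuousOnInterval (fun _ ↦ c) a b := by
  simp [AbsolutelyContinuousOnInterval, tendsto_const_nhds]

theorem _root_.AbsolutelyContinuousOnInterval.congr {f g : ℝ → X}
    (hf : AbsolutelyContinuousOnInterval f a b) (hfg : EqOn f g (uIcc a b)) :
    AbsolutelyContinuousOnInterval g a b := by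
  refine hf.congr' (eventually_inf_principal.2 (Eventually.of_forall fun E hE ↦ ?_))
  refine Finset.sum_congr rfl fun i hi ↦ ?_
  rw [hfg (hE.1 i hi).1, hfg (hE.1 i hi).2]

theorem _root_.AbsolutelyContinuousOnInterval.finsetSum {α : Type*} {s : Finset α}
    {f : α → ℝ → ℝ} (hf : ∀ i ∈ s, AbsolutelyContinuousOnInterval (f i) a b) :
    AbsolutelyContinuousOnInterval (fun t ↦ ∑ i ∈ s, f i t) a b := by
  classical
  induction s using Finset.induction_on with
  | empty => simpa using absolutelyContinuousOnInterval_const (0 : ℝ)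
  | insert j s hj ih =>
    simp_rw [Finset.sum_insert hj]
    exact (hf j (Finset.mem_insert_self j s)).fun_add
      (ih fun i hi ↦ hf i (Finset.mem_insert_of_mem hi))

theorem _root_.AbsolutelyContinuousOnInterval.finsetProd {α : Type*} {s : Finset α}
    {f : α → ℝ → ℝ} (hf : ∀ i ∈ s, AbsolutelyContinuousOnInterval (f i) a b) :
    AbsolutelyContinuousOnInterval (fun t ↦ ∏ i ∈ s, f i t) a b := by
  classical
  induction s using Finset.induction_on with
  | empty => simpa using absolutelyContinuousOnInterval_const (1 : ℝ)
  | insert j s hj ih =>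
    simp_rw [Finset.prod_insert hj]
    exact (hf j (Finset.mem_insert_self j s)).fun_mul
      (ih fun i hi ↦ hf i (Finset.mem_insert_of_mem hi))

end AbsolutelyContinuous

open Set in
theorem _root_.ContinuousOn.mapsTo_Icc_of_ae {Z : Type*} [TopologicalSpace Z] {g : ℝ → Z}
    {C : Set Z} {s t : ℝ} (hst : s < t) (hg : ContinuousOn g (Icc s t)) (hC : IsClosed C)
    (h : ∀ᵐ r, r ∈ Ioo s t → g r ∈ C) : MapsTo g (Icc s t) C := by
  have hopen : IsOpen (Ioo s t ∩ g ⁻¹' Cᶜ) :=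
    (hg.mono Ioo_subset_Icc_self).isOpen_inter_preimage isOpen_Ioo hC.isOpen_compl
  have hnull : volume (Ioo s t ∩ g ⁻¹' Cᶜ) = 0 := by
    convert ae_iff.1 h using 2
    ext r
    simp [and_assoc]
  have hIoo : MapsTo g (Ioo s t) C := fun r hr ↦ by
    by_contra hrC
    exact ((hopen.measure_eq_zero_iff volume).1 hnull).subset ⟨hr, hrC⟩
  rw [← closure_Ioo hst.ne] at hg ⊢
  exact fun r hr ↦ hC.closure_subset_iff.2 hIoo.image_subset (hg.image_closure ⟨r, hr, rfl⟩)

section Primitive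

open Set

theorem intervalIntegrable_of_locallyIntegrableOn_Ici {F : Type*} [NormedAddCommGroup F]
    {g : ℝ → F} {c s t : ℝ}
    (hg : LocallyIntegrableOn g (Ici c)) (hs : c ≤ s) (ht : c ≤ t) :
    IntervalIntegrable g volume s t :=
  (hg.integrableOn_compact_subset (fun _ hr ↦ le_trans (le_min hs ht) hr.1)
    isCompact_uIcc).intervalIntegrable

variable {E : Type*} [NormedAddCommGroup E] [NormedSpace ℝ E] {s t : ℝ}

theorem eq_add_intervalIntegral_of_eq_add_integral_Ioc {x g : ℝ → E}
    (hg : LocallyIntegrableOn g (Ici 0))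
    (hx : ∀ t, 0 ≤ t → x t = x 0 + ∫ r in Ioc 0 t, g r) (hs : 0 ≤ s) {v : ℝ} (hv : s ≤ v) :
    x v = x s + ∫ r in s..v, g r := by
  rw [hx v (hs.trans hv), hx s hs, ← intervalIntegral.integral_of_le (hs.trans hv),
    ← intervalIntegral.integral_of_le hs, add_assoc,
    intervalIntegral.integral_add_adjacent_intervals
      (intervalIntegrable_of_locallyIntegrableOn_Ici hg le_rfl hs)
      (intervalIntegrable_of_locallyIntegrableOn_Ici hg hs (hs.trans hv))]

theorem continuousOn_of_eq_add_integral {x g : ℝ → E} (hg : IntervalIntegrable g volume s t)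
    (hx : ∀ v ∈ Icc s t, x v = x s + ∫ r in s..v, g r) : ContinuousOn x (Icc s t) :=
  ((continuousOn_const.add (intervalIntegral.continuousOn_primitive_interval' hg
    left_mem_uIcc)).mono Icc_subset_uIcc).congr hx

theorem ae_hasDerivAt_of_eq_add_integral [CompleteSpace E] {x g : ℝ → E}
    (hg : IntervalIntegrable g volume s t)
    (hx : ∀ v ∈ Icc s t, x v = x s + ∫ r in s..v, g r) :
    ∀ᵐ v, v ∈ Ioo s t → HasDerivAt x (g v) v := by
  filter_upwards [hg.ae_hasDerivAt_integral] with v hv hvI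
  have hst : s ≤ t := hvI.1.le.trans hvI.2.le
  refine ((hv (uIcc_of_le hst ▸ Ioo_subset_Icc_self hvI) s left_mem_uIcc).const_add
    (x s)).congr_of_eventuallyEq ?_
  filter_upwards [Ioo_mem_nhds hvI.1 hvI.2] with w hw using hx w (Ioo_subset_Icc_self hw)

theorem ae_hasDerivAt_of_eq_add_integral_Ioc [CompleteSpace E] {x g : ℝ → E}
    (hg : LocallyIntegrableOn g (Ici 0))
    (hx : ∀ t, 0 ≤ t → x t = x 0 + ∫ r in Ioc 0 t, g r) :
    ∀ᵐ r, 0 < r → HasDerivAt x (g r) r := by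
  have hloc := ae_all_iff.2 fun n : ℕ ↦ ae_hasDerivAt_of_eq_add_integral
    (intervalIntegrable_of_locallyIntegrableOn_Ici hg le_rfl n.cast_nonneg)
    fun v hv ↦ eq_add_intervalIntegral_of_eq_add_integral_Ioc hg hx le_rfl hv.1
  filter_upwards [hloc] with r hr hr0
  obtain ⟨n, hn⟩ := exists_nat_gt r
  exact hr n ⟨hr0, hn⟩

theorem _root_.ContinuousLinearMap.absolutelyContinuousOnInterval_comp_of_eq_add_integral
    [CompleteSpace E] (L : E →L[ℝ] ℝ) {x g : ℝ → E} (hst : s ≤ t)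
    (hg : IntervalIntegrable g volume s t)
    (hx : ∀ v ∈ Icc s t, x v = x s + ∫ r in s..v, g r) :
    AbsolutelyContinuousOnInterval (fun r ↦ L (x r)) s t := by
  have hLg : IntervalIntegrable (fun r ↦ L (g r)) volume s t :=
    ⟨L.integrable_comp hg.1, L.integrable_comp hg.2⟩
  refine ((absolutelyContinuousOnInterval_const (L (x s))).fun_add
    (hLg.absolutelyContinuousOnInterval_intervalIntegral left_mem_uIcc)).congr fun v hv ↦ ?_
  rw [uIcc_of_le hst] at hv
  simp only [hx v hv, map_add, L.intervalIntegral_comp_comm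
    (hg.mono_set (uIcc_subset_uIcc left_mem_uIcc (uIcc_of_le hst ▸ hv)))]

end Primitive

section MixedExtension

variable (u : (ι → A) → ℝ)

theorem continuous_U : Continuous (U u) := by
  unfold U
  fun_prop

theorem U_update_sub_s11 (p : ι → A → ℝ) (i : ι) (q : A → ℝ) :
    U u (Function.update p i q) - U u p
      = ∑ y : ι → A, u y * ((q (y i) - p i (y i)) * ∏ j ∈ Finset.univ.erase i, p j (y j)) := by
  rw [U, U, ← Finset.sum_sub_distrib]
  refine Finset.sum_congr rfl fun y _ ↦ ?_
  rw [← Finset.mul_prod_erase Finset.univ _ (Finset.mem_univ i),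
    ← Finset.mul_prod_erase Finset.univ _ (Finset.mem_univ i), Function.update_self,
    Finset.prod_congr rfl fun j hj ↦ by rw [Function.update_of_ne (Finset.ne_of_mem_erase hj)]]
  ring

theorem hasDerivAt_U_comp {p : ℝ → ι → A → ℝ} {b : ι → A → ℝ} {r : ℝ}
    (hp : ∀ i a, HasDerivAt (fun t ↦ p t i a) (b i a - p r i a) r) :
    HasDerivAt (fun t ↦ U u (p t))
      (∑ i, (U u (Function.update (p r) i (b i)) - U u (p r))) r := by
  have hprod (y : ι → A) := HasDerivAt.fun_finsetProd (u := Finset.univ)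
    (f := fun i t ↦ p t i (y i)) fun i _ ↦ hp i (y i)
  refine (HasDerivAt.fun_sum fun y _ ↦ (hprod y).const_mul (u y)).congr_deriv ?_
  simp only [U_update_sub_s11, smul_eq_mul]
  rw [Finset.sum_comm]
  refine Finset.sum_congr rfl fun y _ ↦ ?_
  rw [Finset.mul_sum]
  exact Finset.sum_congr rfl fun i _ ↦ by ring

theorem absolutelyContinuousOnInterval_U_comp {p : ℝ → ι → A → ℝ} {s t : ℝ}
    (hp : ∀ i a, AbsolutelyContinuousOnInterval (fun r ↦ p r i a) s t) :
    AbsolutelyContinuousOnInterval (fun r ↦ U u (p r)) s t :=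
  AbsolutelyContinuousOnInterval.finsetSum fun y _ ↦
    (AbsolutelyContinuousOnInterval.finsetProd fun i _ ↦ hp i (y i)).const_mul (u y)

end MixedExtension

section Equilibria

theorem isClosed_simplex_s11 {α : Type*} (Y : Finset α) : IsClosed (simplex Y) := by
  simp only [simplex, Set.ofPred_and, Set.ofPred_forall]
  exact (isClosed_iInter fun a ↦ isClosed_le continuous_const (continuous_apply a)).inter
    ((isClosed_iInter fun a ↦ isClosed_iInter fun _ ↦
      isClosed_eq (continuous_apply a) continuous_const).inter
    (isClosed_eq (continuous_finsetSum _ fun a _ ↦ continuous_apply a) continuous_const))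

theorem isClosed_NE (Y : ι → Finset A) (u : (ι → A) → ℝ) : IsClosed (NE Y u) := by
  have hDelta : IsClosed (Delta Y) := by
    simp only [Delta, Set.ofPred_forall]
    exact isClosed_iInter fun i ↦ (isClosed_simplex_s11 (Y i)).preimage (continuous_apply i)
  simp only [NE, Set.ofPred_and, Set.ofPred_forall, Set.ofPred_mem_eq]
  exact hDelta.inter (isClosed_iInter fun i ↦ isClosed_iInter fun q ↦ isClosed_iInter fun _ ↦
    isClosed_le ((continuous_U u).comp (continuous_id.update i continuous_const))
      (continuous_U u))

variable {Y : ι → Finset A} {u : (ι → A) → ℝ}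

theorem U_le_U_update_of_mem_BR {p b : ι → A → ℝ} (hp : p ∈ Delta Y) (hb : b ∈ BR Y u 0 p)
    (i : ι) : U u p ≤ U u (Function.update p i (b i)) := by
  simpa using (hb i).2 (p i) (hp i)

theorem mem_NE_iff_sum_sub_eq_zero {p b : ι → A → ℝ} (hp : p ∈ Delta Y)
    (hb : b ∈ BR Y u 0 p) :
    p ∈ NE Y u ↔ ∑ i, (U u (Function.update p i (b i)) - U u p) = 0 := by
  have hnonneg i : 0 ≤ U u (Function.update p i (b i)) - U u p :=
    sub_nonneg.2 (U_le_U_update_of_mem_BR hp hb i)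
  rw [Finset.sum_eq_zero_iff_of_nonneg fun i _ ↦ hnonneg i]
  refine ⟨fun hNE i _ ↦ le_antisymm (sub_nonpos.2 (hNE.2 i (b i) (hb i).1)) (hnonneg i),
    fun h ↦ ⟨hp, fun i q hq ↦ ?_⟩⟩
  have := (hb i).2 q hq
  linarith [h i (Finset.mem_univ i)]

end Equilibria

section Solution

open Set

variable {Y : ι → Finset A} {x : ℝ → ι → A → ℝ} {s t : ℝ}

theorem IsSolution.absolutelyContinuousOnInterval_U {F : (ι → A → ℝ) → Set (ι → A → ℝ)}
    (hx : IsSolution Y F x) (u : (ι → A) → ℝ) (hs : 0 ≤ s) (hst : s ≤ t) :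
    AbsolutelyContinuousOnInterval (fun r ↦ U u (x r)) s t := by
  obtain ⟨-, g, hg, -, hrep⟩ := hx
  refine absolutelyContinuousOnInterval_U_comp u fun i a ↦ ?_
  exact ((ContinuousLinearMap.proj (R := ℝ) (φ := fun _ : A ↦ ℝ) a).comp
    (ContinuousLinearMap.proj (R := ℝ) (φ := fun _ : ι ↦ A → ℝ) i)
      ).absolutelyContinuousOnInterval_comp_of_eq_add_integral hst
      (intervalIntegrable_of_locallyIntegrableOn_Ici hg hs (hs.trans hst))
      fun v hv ↦ eq_add_intervalIntegral_of_eq_add_integral_Ioc hg hrep hs hv.1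

variable {u : (ι → A) → ℝ}

theorem IsSolution.ae_hasDerivAt_U (hx : IsSolution Y (Fcent Y u) x) :
    ∀ᵐ r, 0 < r → ∃ b ∈ BR Y u 0 (x r), HasDerivAt (fun v ↦ U u (x v))
      (∑ i, (U u (Function.update (x r) i (b i)) - U u (x r))) r := by
  obtain ⟨-, g, hg, hgF, hrep⟩ := hx
  filter_upwards [ae_hasDerivAt_of_eq_add_integral_Ioc hg hrep,
    (ae_restrict_iff' measurableSet_Ici).1 hgF] with r hderiv hF hr
  obtain ⟨b, hb, hgb⟩ := hF hr.le
  refine ⟨b, hb, hasDerivAt_U_comp u fun i a ↦ ?_⟩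
  have := hasDerivAt_pi.1 (hasDerivAt_pi.1 (hderiv hr) i) a
  rwa [← hgb] at this

theorem IsSolution.U_eq_of_forall_mem_NE (hx : IsSolution Y (Fcent Y u) x) (hs : 0 ≤ s)
    (hst : s ≤ t) (hNE : ∀ r ∈ Icc s t, x r ∈ NE Y u) : U u (x s) = U u (x t) := by
  obtain ⟨C, hC⟩ := (hx.absolutelyContinuousOnInterval_U u hs hst).const_of_ae_hasDerivAt_zero
    (by
      filter_upwards [hx.ae_hasDerivAt_U, Measure.ae_ne volume s] with r hderiv hrs hr
      rw [uIcc_of_le hst] at hr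
      obtain ⟨b, hb, hd⟩ := hderiv (hs.trans_lt (lt_of_le_of_ne hr.1 hrs.symm))
      rwa [(mem_NE_iff_sum_sub_eq_zero (hx.1 r (hs.trans hr.1)) hb).1 (hNE r hr)] at hd)
  rw [hC s left_mem_uIcc, hC t right_mem_uIcc]

theorem IsSolution.mem_NE_of_U_eq (hx : IsSolution Y (Fcent Y u) x) (hs : 0 ≤ s)
    (hst : s < t) (hU : ∀ r ∈ Icc s t, U u (x r) = U u (x s)) :
    ∀ r ∈ Icc s t, x r ∈ NE Y u := by
  have hcont : ContinuousOn x (Icc s t) := by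
    obtain ⟨-, g, hg, -, hrep⟩ := hx
    exact continuousOn_of_eq_add_integral
      (intervalIntegrable_of_locallyIntegrableOn_Ici hg hs (hs.trans hst.le))
      fun v hv ↦ eq_add_intervalIntegral_of_eq_add_integral_Ioc hg hrep hs hv.1
  refine hcont.mapsTo_Icc_of_ae hst (isClosed_NE Y u) ?_
  filter_upwards [hx.ae_hasDerivAt_U] with r hderiv hr
  obtain ⟨b, hb, hd⟩ := hderiv (hs.trans_lt hr.1)
  have hzero : HasDerivAt (fun v ↦ U u (x v)) 0 r :=
    (hasDerivAt_const r (U u (x s))).congr_of_eventuallyEq <| by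
      filter_upwards [Ioo_mem_nhds hr.1 hr.2] with v hv using hU v (Ioo_subset_Icc_self hv)
  exact (mem_NE_iff_sum_sub_eq_zero (hx.1 r (hs.trans hr.1.le)) hb).2 (hd.unique hzero)

end Solution

variable [Nonempty ι]

theorem U_constant_iff_SNE_general
    (Y : ι → Finset A) (u : (ι → A) → ℝ)
    (cls : ι → κ)
    (x : ℝ → ι → A → ℝ) (hx : IsSolution Y (Fcent Y u) x)
    (hcc : ∀ t : ℝ, 0 ≤ t → classConst cls (x t))
    (T : Set ℝ) (hT : T ⊆ Set.Ici 0) (hTc : T.OrdConnected)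
    (hTnd : ∃ s ∈ T, ∃ t ∈ T, s < t) :
    (∀ s ∈ T, ∀ t ∈ T, U u (x s) = U u (x t)) ↔ (∀ t ∈ T, x t ∈ SNE Y u cls) := by
  refine ⟨fun hconst τ hτ ↦ ⟨?_, hcc τ (hT hτ)⟩, fun hSNE s hs t ht ↦ ?_⟩
  · obtain ⟨s, hs, t, ht, hst⟩ := hTnd
    have hmin : min τ s ∈ T := min_rec' (· ∈ T) hτ hs
    have hsub : Set.Icc (min τ s) (max τ t) ⊆ T := hTc.out hmin (max_rec' (· ∈ T) hτ ht)
    exact hx.mem_NE_of_U_eq (hT hmin)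
      ((min_le_right τ s).trans_lt (hst.trans_le (le_max_right τ t)))
      (fun r hr ↦ hconst r (hsub hr) _ hmin)
      τ ⟨min_le_left τ s, le_max_left τ t⟩
  · wlog hst : s ≤ t generalizing s t
    · exact (this t ht s hs (le_of_not_ge hst)).symm
    exact hx.U_eq_of_forall_mem_NE (hT hs) hst fun r hr ↦ (hSNE r (hTc.out hs ht hr)).1

/-- Along any class-constant-valued solution of the centroid CT-ECFP inclusion, and for any
nondegenerate interval `T ⊆ [0,∞)`, `t ↦ U(q̄^c(t))` is constant on `T` iff
`q̄^c(t) ∈ SNE` for every `t ∈ T`. -/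
theorem U_constant_iff_SNE
    (Y : ι → Finset A) (hY : ∀ i, (Y i).Nonempty) (u : (ι → A) → ℝ)
    (cls : ι → κ) (hpi : PermInvariant Y u cls)
    (x : ℝ → ι → A → ℝ) (hx : IsSolution Y (Fcent Y u) x)
    (hcc : ∀ t : ℝ, 0 ≤ t → classConst cls (x t))
    (T : Set ℝ) (hT : T ⊆ Set.Ici 0) (hTc : T.OrdConnected)
    (hTnd : ∃ s ∈ T, ∃ t ∈ T, s < t) :
    (∀ s ∈ T, ∀ t ∈ T, U u (x s) = U u (x t)) ↔ (∀ t ∈ T, x t ∈ SNE Y u cls) :=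
  U_constant_iff_SNE_general Y u cls x hx hcc T hT hTc hTnd

end ECFP
end
end
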